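/- arXiv:math/0106023 — 2 statements merged into one kernel-verified Lean document; each statement's English description precedes it below -/
import Mathlib

section
/- Let E be an infinite-dimensional Banach space and let Σ be a countable set. Let τ be a mapping defined on the family 𝒢(E) of all infinite-dimensional closed subspaces of E with values in the powerset of Σ, which is increasing with respect to the quasi-order ≤ and inclusion, i.e. for all N, M ∈ 𝒢(E), if N ≤ M then τ(N) ⊆ τ(M). Then there exists a subspace M ∈ 𝒢(E) which is stabilizing for τ, i.e. τ(L) = τ(M) for every infinite-dimensional closed subspace L of M. -/
open Filter Topology

/-- Two sequences of vectors are `c`-equivalent: the natural map between their spans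
distorts norms of finite linear combinations by at most a factor `c`. -/
def SeqEquiv {E F : Type*} [NormedAddCommGroup E] [NormedSpace ℝ E]
    [NormedAddCommGroup F] [NormedSpace ℝ F]
    (c : ℝ) (x : ℕ → E) (y : ℕ → F) : Prop :=
  ∀ (s : Finset ℕ) (a : ℕ → ℝ),
    (1 / c) * ‖∑ i ∈ s, a i • x i‖ ≤ ‖∑ i ∈ s, a i • y i‖ ∧
    ‖∑ i ∈ s, a i • y i‖ ≤ c * ‖∑ i ∈ s, a i • x i‖

/-- A basic sequence: nonzero vectors whose partial-sum projections are uniformly bounded,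
i.e. a Schauder basis of its closed linear span. -/
def IsBasicSeq {E : Type*} [NormedAddCommGroup E] [NormedSpace ℝ E] (x : ℕ → E) : Prop :=
  (∀ n, x n ≠ 0) ∧
  ∃ K : ℝ, 1 ≤ K ∧ ∀ (a : ℕ → ℝ) (m n : ℕ), m ≤ n →
    ‖∑ i ∈ Finset.range m, a i • x i‖ ≤ K * ‖∑ i ∈ Finset.range n, a i • x i‖

/-- An unconditional basic sequence. -/
def IsUnconditionalSeq {E : Type*} [NormedAddCommGroup E] [NormedSpace ℝ E]
    (x : ℕ → E) : Prop :=
  IsBasicSeq x ∧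
  ∃ K : ℝ, 0 < K ∧ ∀ (s : Finset ℕ) (a ε : ℕ → ℝ), (∀ i, ε i = 1 ∨ ε i = -1) →
    ‖∑ i ∈ s, (ε i * a i) • x i‖ ≤ K * ‖∑ i ∈ s, a i • x i‖

/-- A `C`-subsymmetric sequence: an unconditional basic sequence that is `C`-equivalent
to each of its subsequences. -/
def IsSubsymmetric {E : Type*} [NormedAddCommGroup E] [NormedSpace ℝ E]
    (C : ℝ) (x : ℕ → E) : Prop :=
  IsUnconditionalSeq x ∧ ∀ φ : ℕ → ℕ, StrictMono φ → SeqEquiv C x (x ∘ φ)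

/-- A Schauder basis of `E`: biorthogonal system whose partial sums of the expansion of
every vector converge to that vector. -/
structure RealSchauderBasis (E : Type*) [NormedAddCommGroup E] [NormedSpace ℝ E] where
  e : ℕ → E
  coord : ℕ → E →L[ℝ] ℝ
  biorth : ∀ i j, coord i (e j) = if i = j then (1 : ℝ) else 0
  expand : ∀ x : E,
    Filter.Tendsto (fun n => ∑ i ∈ Finset.range n, coord i x • e i) atTop (𝓝 x)

/-- A block sequence with respect to a Schauder basis: nonzero, finitely supported
vectors with successive supports. -/
def IsBlockSeq {E : Type*} [NormedAddCommGroup E] [NormedSpace ℝ E]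
    (b : RealSchauderBasis E) (x : ℕ → E) : Prop :=
  (∀ n, x n ≠ 0) ∧
  (∀ n, (Function.support fun i => b.coord i (x n)).Finite) ∧
  ∀ m n, m < n → ∀ i ∈ Function.support (fun i => b.coord i (x m)),
    ∀ j ∈ Function.support (fun j => b.coord j (x n)), i < j

/-- A block subspace: the closed linear span of a block sequence. -/
def IsBlockSubspace {E : Type*} [NormedAddCommGroup E] [NormedSpace ℝ E]
    (b : RealSchauderBasis E) (M : Submodule ℝ E) : Prop :=
  ∃ x : ℕ → E, IsBlockSeq b x ∧ M = (Submodule.span ℝ (Set.range x)).topologicalClosure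

/-- An infinite-dimensional closed subspace. -/
def InfDimClosed {E : Type*} [NormedAddCommGroup E] [NormedSpace ℝ E]
    (M : Submodule ℝ E) : Prop :=
  IsClosed (M : Set E) ∧ ¬ FiniteDimensional ℝ M

/-- The quasi-order on subspaces: `L ≤ M` iff `L ⊆ M + F` for some finite-dimensional `F`. -/
def SubspaceLE {E : Type*} [NormedAddCommGroup E] [NormedSpace ℝ E]
    (L M : Submodule ℝ E) : Prop :=
  ∃ F : Submodule ℝ E, FiniteDimensional ℝ F ∧ L ≤ M ⊔ F

/-- The equivalence relation `≐` induced by the quasi-order `SubspaceLE`. -/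
def SubspaceEquiv {E : Type*} [NormedAddCommGroup E] [NormedSpace ℝ E]
    (L M : Submodule ℝ E) : Prop :=
  SubspaceLE L M ∧ SubspaceLE M L

/-- Two normed spaces are `c`-isomorphic: a linear isomorphism with
`(1/c)‖v‖ ≤ ‖Tv‖ ≤ c‖v‖`. -/
def IsoWithConst (c : ℝ) (X Y : Type*) [NormedAddCommGroup X] [NormedSpace ℝ X]
    [NormedAddCommGroup Y] [NormedSpace ℝ Y] : Prop :=
  ∃ T : X ≃ₗ[ℝ] Y, ∀ v : X, (1 / c) * ‖v‖ ≤ ‖T v‖ ∧ ‖T v‖ ≤ c * ‖v‖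

/-- A `c`-minimal Banach space: every infinite-dimensional closed subspace contains a
further infinite-dimensional closed subspace `c`-isomorphic to the whole space. -/
def CMinimalSpace (c : ℝ) (X : Type*) [NormedAddCommGroup X] [NormedSpace ℝ X] : Prop :=
  ∀ L : Submodule ℝ X, InfDimClosed L →
    ∃ N : Submodule ℝ X, N ≤ L ∧ InfDimClosed N ∧ IsoWithConst c ↥N X

/-- A minimal Banach space: every infinite-dimensional closed subspace contains a
further infinite-dimensional closed subspace isomorphic to the whole space. -/
def MinimalSpace (X : Type*) [NormedAddCommGroup X] [NormedSpace ℝ X] : Prop :=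
  ∀ L : Submodule ℝ X, InfDimClosed L →
    ∃ N : Submodule ℝ X, N ≤ L ∧ InfDimClosed N ∧ Nonempty (↥N ≃L[ℝ] X)

/-!
Enumerate `σ` as `e 0, e 1, …` and build a decreasing sequence `M 0 ⊇ M 1 ⊇ ⋯` of
infinite-dimensional closed subspaces in which `M (n + 1)` decides `e n`: either
`e n ∉ τ (M (n + 1))`, or `e n ∈ τ L` for every `L ⊆ M (n + 1)` in `𝒢(E)`. The closed span `Y`
of linearly independent vectors `x n ∈ M n` lies in `M n + span {x i | i < n}`, so `Y ≤ M n` in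
the quasi-order for every `n`. If `L ⊆ Y` and `e n ∈ τ Y`, then `e n ∈ τ (M (n + 1))` by
monotonicity; as `L ⊆ M (n + 1) + F` with `F` finite-dimensional, `L ∩ M (n + 1)` is still
infinite-dimensional, hence `e n ∈ τ (L ∩ M (n + 1)) ⊆ τ L`.
-/

open Set Submodule

section LinearAlgebra

variable {K V : Type*} [DivisionRing K] [AddCommGroup V] [Module K V]

theorem linearIndependent_of_notMem_span_image_Iio {x : ℕ → V}
    (hx : ∀ n, x n ∉ span K (x '' Iio n)) : LinearIndependent K x := by
  have hIio : ∀ n, LinearIndepOn K x (Iio n) := by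
    intro n
    induction n with
    | zero => simp
    | succ n ih =>
      rw [← Order.succ_eq_add_one, Order.Iio_succ_eq_insert, linearIndepOn_insert self_notMem_Iio]
      exact ⟨ih, hx n⟩
  rw [← linearIndepOn_univ_iff, ← iUnion_Iio]
  exact linearIndepOn_iUnion_of_directed (monotone_Iio (α := ℕ)).directed_le hIio

theorem exists_linearIndependent_forall_mem {M : ℕ → Submodule K V}
    (hM : ∀ n, ¬ FiniteDimensional K (M n)) :
    ∃ x : ℕ → V, LinearIndependent K x ∧ ∀ n, x n ∈ M n := by
  have hext : ∀ n (s : Set V), s.Finite → ∃ v ∈ M n, v ∉ span K s := by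
    intro n s hs
    by_contra! h
    have : FiniteDimensional K (span K s) := FiniteDimensional.span_of_finite K hs
    exact hM n (Submodule.finiteDimensional_of_le h)
  choose! next hnext_mem hnext_notMem using hext
  let s : ℕ → Set V := fun n => Nat.rec ∅ (fun n t => insert (next n t) t) n
  let x : ℕ → V := fun n => next n (s n)
  have hs : ∀ n, s n = x '' Iio n := by
    intro n
    induction n with
    | zero => simp [s]
    | succ n ih =>
      rw [← Order.succ_eq_add_one, Order.Iio_succ_eq_insert, image_insert_eq, ← ih]
      rfl
  have hs_finite : ∀ n, (s n).Finite := fun n => hs n ▸ (finite_Iio n).image x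
  refine ⟨x, linearIndependent_of_notMem_span_image_Iio fun n => ?_,
    fun n => hnext_mem n _ (hs_finite n)⟩
  rw [← hs]
  exact hnext_notMem n _ (hs_finite n)

theorem finiteDimensional_of_le_sup {L M F : Submodule K V} [FiniteDimensional K F]
    [FiniteDimensional K (L ⊓ M : Submodule K V)] (h : L ≤ M ⊔ F) :
    FiniteDimensional K L := by
  have hmap : L.map M.mkQ ≤ F.map M.mkQ := by
    simpa [map_sup] using map_mono (f := M.mkQ) h
  have : FiniteDimensional K (L.map M.mkQ) := Submodule.finiteDimensional_of_le hmap
  refine Module.Finite.iff_fg.mpr (fg_of_fg_map_of_fg_inf_ker M.mkQ ?_ ?_)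
  · exact Module.Finite.iff_fg.mp inferInstance
  · rw [ker_mkQ]
    exact Module.Finite.iff_fg.mp inferInstance

end LinearAlgebra

section Subspaces

variable {E : Type*} [NormedAddCommGroup E] [NormedSpace ℝ E]

theorem SubspaceLE.of_le {L M : Submodule ℝ E} (h : L ≤ M) : SubspaceLE L M :=
  ⟨⊥, inferInstance, by simpa using h⟩

theorem SubspaceLE.trans {L M N : Submodule ℝ E} (hLM : SubspaceLE L M) (hMN : SubspaceLE M N) :
    SubspaceLE L N := by
  obtain ⟨F, hF, hL⟩ := hLM
  obtain ⟨G, hG, hM⟩ := hMN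
  refine ⟨G ⊔ F, Submodule.finiteDimensional_sup G F, hL.trans ?_⟩
  rw [← sup_assoc]
  exact sup_le_sup_right hM F

theorem InfDimClosed.top (hE : ¬ FiniteDimensional ℝ E) : InfDimClosed (⊤ : Submodule ℝ E) :=
  ⟨isClosed_univ, fun _ => hE topEquiv.finiteDimensional⟩

theorem InfDimClosed.inf_of_subspaceLE {L M : Submodule ℝ E} (hL : InfDimClosed L)
    (hM : IsClosed (M : Set E)) (hLM : SubspaceLE L M) : InfDimClosed (L ⊓ M) := by
  obtain ⟨F, hF, hLMF⟩ := hLM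
  exact ⟨hL.1.inter hM, fun _ => hL.2 (finiteDimensional_of_le_sup hLMF)⟩

theorem exists_infDimClosed_forall_subspaceLE {M : ℕ → Submodule ℝ E} (hM : Antitone M)
    (hMc : ∀ n, InfDimClosed (M n)) : ∃ Y, InfDimClosed Y ∧ ∀ n, SubspaceLE Y (M n) := by
  obtain ⟨x, hx_li, hx_mem⟩ := exists_linearIndependent_forall_mem fun n => (hMc n).2
  refine ⟨(span ℝ (range x)).topologicalClosure,
    ⟨isClosed_topologicalClosure _, fun h => ?_⟩, fun n => ?_⟩
  · have : FiniteDimensional ℝ (span ℝ (range x)) :=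
      Submodule.finiteDimensional_of_le (le_topologicalClosure _)
    have : Finite ℕ := (linearIndependent_span hx_li).finite
    exact not_finite ℕ
  · have : FiniteDimensional ℝ (span ℝ (x '' Iio n)) :=
      FiniteDimensional.span_of_finite ℝ ((finite_Iio n).image x)
    refine ⟨_, this,
      topologicalClosure_minimal _ ?_ (isClosed_sup_finiteDimensional _ _ (hMc n).1)⟩
    rw [span_le]
    rintro _ ⟨i, rfl⟩
    rcases lt_or_ge i n with hin | hni
    · exact mem_sup_right (subset_span (mem_image_of_mem x hin))
    · exact mem_sup_left (hM hni (hx_mem i))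

end Subspaces

section Stabilization

variable {E σ : Type*} [NormedAddCommGroup E] [NormedSpace ℝ E]

theorem exists_le_infDimClosed_decides (τ : Submodule ℝ E → Set σ) (s : σ)
    {M : Submodule ℝ E} (hM : InfDimClosed M) :
    ∃ N ≤ M, InfDimClosed N ∧
      (s ∈ τ N → ∀ L ≤ N, InfDimClosed L → s ∈ τ L) := by
  by_cases h : ∃ L ≤ M, InfDimClosed L ∧ s ∉ τ L
  · obtain ⟨L, hLM, hL, hs⟩ := h
    exact ⟨L, hLM, hL, fun hs' => absurd hs' hs⟩
  · push Not at h
    exact ⟨M, le_rfl, hM, fun _ L hLM hL => h L hLM hL⟩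

theorem exists_antitone_infDimClosed_decides (hE : ¬ FiniteDimensional ℝ E)
    (τ : Submodule ℝ E → Set σ) (e : ℕ → σ) :
    ∃ M : ℕ → Submodule ℝ E, Antitone M ∧ (∀ n, InfDimClosed (M n)) ∧
      ∀ n, e n ∈ τ (M (n + 1)) → ∀ L ≤ M (n + 1), InfDimClosed L → e n ∈ τ L := by
  choose! step hstep_le hstep hstep_decides using
    fun n (M : Submodule ℝ E) (hM : InfDimClosed M) => exists_le_infDimClosed_decides τ (e n) hM
  let M : ℕ → Submodule ℝ E := fun n => Nat.rec ⊤ step n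
  have hM : ∀ n, InfDimClosed (M n) := by
    intro n
    induction n with
    | zero => exact InfDimClosed.top hE
    | succ n ih => exact hstep n _ ih
  exact ⟨M, antitone_nat_of_succ_le fun n => hstep_le n _ (hM n), hM,
    fun n => hstep_decides n _ (hM n)⟩

end Stabilization

theorem stabilizing_lemma_increasing_general
    {E : Type*} [NormedAddCommGroup E] [NormedSpace ℝ E]
    (hE : ¬ FiniteDimensional ℝ E)
    {σ : Type*} [Countable σ]
    (τ : Submodule ℝ E → Set σ)
    (hmono : ∀ N M : Submodule ℝ E, InfDimClosed N → InfDimClosed M →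
      SubspaceLE N M → τ N ⊆ τ M) :
    ∃ M : Submodule ℝ E, InfDimClosed M ∧
      ∀ L : Submodule ℝ E, InfDimClosed L → L ≤ M → τ L = τ M := by
  rcases isEmpty_or_nonempty σ with hσ | hσ
  · exact ⟨⊤, InfDimClosed.top hE, fun _ _ _ => Subsingleton.elim _ _⟩
  obtain ⟨e, he⟩ := exists_surjective_nat σ
  obtain ⟨M, hM_anti, hM, hM_decides⟩ := exists_antitone_infDimClosed_decides hE τ e
  obtain ⟨Y, hY, hYM⟩ := exists_infDimClosed_forall_subspaceLE hM_anti hM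
  refine ⟨Y, hY, fun L hL hLY => (hmono L Y hL hY (.of_le hLY)).antisymm fun s hs => ?_⟩
  obtain ⟨n, rfl⟩ := he s
  have hLM : InfDimClosed (L ⊓ M (n + 1)) :=
    hL.inf_of_subspaceLE (hM (n + 1)).1 ((SubspaceLE.of_le hLY).trans (hYM (n + 1)))
  have hs_M : e n ∈ τ (M (n + 1)) := hmono Y _ hY (hM _) (hYM _) hs
  exact hmono _ L hLM hL (.of_le inf_le_left) (hM_decides n hs_M _ inf_le_right hLM)

/-- The stabilizing lemma for increasing maps on the family of all
infinite-dimensional closed subspaces of an infinite-dimensional Banach space. -/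
theorem stabilizing_lemma_increasing
    {E : Type*} [NormedAddCommGroup E] [NormedSpace ℝ E] [CompleteSpace E]
    (hE : ¬ FiniteDimensional ℝ E)
    {σ : Type*} [Countable σ]
    (τ : Submodule ℝ E → Set σ)
    (hmono : ∀ N M : Submodule ℝ E, InfDimClosed N → InfDimClosed M →
      SubspaceLE N M → τ N ⊆ τ M) :
    ∃ M : Submodule ℝ E, InfDimClosed M ∧
      ∀ L : Submodule ℝ E, InfDimClosed L → L ≤ M → τ L = τ M :=
  stabilizing_lemma_increasing_general hE τ hmono
end

section
/- Let E be a Banach space with a Schauder basis {e_i}, with biorthogonal functionals {e*_i}. Let {x_n} ⊂ E be a seminormalized basic sequence satisfying lim_{n→∞} e*_i(x_n) = 0 for every i ∈ ℕ. Then for any ε > 0 there is a block sequence {y_n} (with respect to {e_i}) which is (1+ε)-equivalent to some subsequence of {x_n}. -/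
/-!
Cut each `x (k n)` down to a block of its expansion: since every coordinate of `x n` tends to
zero, a late enough term has negligible head `∑_{i < p} e*ᵢ(x k) eᵢ`, and its tail beyond some
`q` is negligible because the expansion converges. Choosing these blocks recursively with
errors `δ / 2^(n+1)` gives a block sequence `y` with `∑ ‖x (k n) - y n‖ ≤ δ`. A basic sequence
with constant `K` and `‖x n‖ ≥ m` has coefficients `|aᵢ| ≤ 2K‖∑ aⱼ xⱼ‖ / m`, so such a
perturbation changes the norm of every combination by at most a factor `1 ± 2Kδ/m`, and
`2Kδ/m = ε/(1+ε)` makes this a `(1+ε)`-equivalence.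
-/

open Filter Topology

section BasisConstant

variable {E : Type*} [NormedAddCommGroup E] [NormedSpace ℝ E]

def HasBasisConst (K : ℝ) (x : ℕ → E) : Prop :=
  ∀ (a : ℕ → ℝ) (m n : ℕ), m ≤ n →
    ‖∑ i ∈ Finset.range m, a i • x i‖ ≤ K * ‖∑ i ∈ Finset.range n, a i • x i‖

theorem sum_range_extend_smul {k : ℕ → ℕ} (hk : StrictMono k) (a : ℕ → ℝ) (x : ℕ → E)
    (m : ℕ) :
    ∑ j ∈ Finset.range (k m), Function.extend k a 0 j • x j =
      ∑ i ∈ Finset.range m, a i • x (k i) := by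
  classical
  have himage : (Finset.range m).image k ⊆ Finset.range (k m) := by
    simpa [Finset.image_subset_iff] using fun i hi => hk hi
  rw [← Finset.sum_subset himage, Finset.sum_image hk.injective.injOn]
  · exact Finset.sum_congr rfl fun i _ => by rw [hk.injective.extend_apply]
  · intro j hj hj'
    rw [Function.extend_apply', Pi.zero_apply, zero_smul]
    rintro ⟨i, rfl⟩
    simp only [Finset.mem_range, Finset.mem_image, not_exists, not_and] at hj hj'
    exact hj' i (hk.lt_iff_lt.mp hj) rfl

theorem HasBasisConst.comp_strictMono {K : ℝ} {x : ℕ → E} (hK : HasBasisConst K x)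
    {k : ℕ → ℕ} (hk : StrictMono k) : HasBasisConst K (x ∘ k) := by
  intro a m n hmn
  simp only [Function.comp_apply, ← sum_range_extend_smul hk]
  exact hK _ _ _ (hk.monotone hmn)

theorem HasBasisConst.norm_smul_le {K : ℝ} {x : ℕ → E} (hK : HasBasisConst K x)
    (s : Finset ℕ) (a : ℕ → ℝ) {i : ℕ} (hi : i ∈ s) :
    ‖a i • x i‖ ≤ 2 * K * ‖∑ j ∈ s, a j • x j‖ := by
  classical
  set N := s.sup id + 1
  set c : ℕ → ℝ := fun j => if j ∈ s then a j else 0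
  have hsN : s ⊆ Finset.range N := fun j hj =>
    Finset.mem_range.mpr (Nat.lt_succ_of_le (Finset.le_sup (f := id) hj))
  have hsum : ∑ j ∈ Finset.range N, c j • x j = ∑ j ∈ s, a j • x j := by
    simp only [c, ite_smul, zero_smul, ← Finset.sum_filter]
    rw [Finset.filter_mem_eq_inter, Finset.inter_eq_right.mpr hsN]
  have hiN : i + 1 ≤ N := Finset.mem_range.mp (hsN hi)
  calc ‖a i • x i‖
      = ‖∑ j ∈ Finset.range (i + 1), c j • x j - ∑ j ∈ Finset.range i, c j • x j‖ := by
        rw [Finset.sum_range_succ, add_sub_cancel_left]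
        simp only [c, if_pos hi]
    _ ≤ K * ‖∑ j ∈ s, a j • x j‖ + K * ‖∑ j ∈ s, a j • x j‖ := by
        rw [← hsum]
        exact (norm_sub_le _ _).trans (add_le_add (hK c _ _ hiN) (hK c _ _ (by omega)))
    _ = 2 * K * ‖∑ j ∈ s, a j • x j‖ := by ring

theorem HasBasisConst.norm_sum_smul_sub_le {K m : ℝ} {x y : ℕ → E} {η : ℕ → ℝ}
    (hK : HasBasisConst K x) (hK0 : 0 ≤ K) (hm : 0 < m) (hmx : ∀ n, m ≤ ‖x n‖)
    (hxy : ∀ n, ‖x n - y n‖ ≤ η n) (hη : Summable η) (s : Finset ℕ) (a : ℕ → ℝ) :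
    ‖∑ i ∈ s, a i • y i - ∑ i ∈ s, a i • x i‖ ≤
      2 * K / m * (∑' n, η n) * ‖∑ i ∈ s, a i • x i‖ := by
  set X := ∑ i ∈ s, a i • x i
  have hη0 : ∀ n, 0 ≤ η n := fun n => (norm_nonneg _).trans (hxy n)
  have hcoef : ∀ i ∈ s, |a i| ≤ 2 * K * ‖X‖ / m := fun i hi => by
    rw [le_div_iff₀ hm]
    have := hK.norm_smul_le s a hi
    rw [norm_smul, Real.norm_eq_abs] at this
    nlinarith [hmx i, abs_nonneg (a i)]
  calc ‖∑ i ∈ s, a i • y i - X‖ = ‖∑ i ∈ s, a i • (y i - x i)‖ := by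
        simp only [X, smul_sub, Finset.sum_sub_distrib]
    _ ≤ ∑ i ∈ s, |a i| * η i := by
        refine (norm_sum_le _ _).trans (Finset.sum_le_sum fun i _ => ?_)
        rw [norm_smul, Real.norm_eq_abs, norm_sub_rev]
        exact mul_le_mul_of_nonneg_left (hxy i) (abs_nonneg _)
    _ ≤ ∑ i ∈ s, 2 * K * ‖X‖ / m * η i :=
        Finset.sum_le_sum fun i hi => mul_le_mul_of_nonneg_right (hcoef i hi) (hη0 i)
    _ ≤ 2 * K * ‖X‖ / m * ∑' n, η n := by
        rw [← Finset.mul_sum]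
        exact mul_le_mul_of_nonneg_left (hη.sum_le_tsum s fun i _ => hη0 i)
          (by positivity)
    _ = 2 * K / m * (∑' n, η n) * ‖X‖ := by ring

end BasisConstant

section Equivalence

variable {E F : Type*} [NormedAddCommGroup E] [NormedSpace ℝ E]
  [NormedAddCommGroup F] [NormedSpace ℝ F]

theorem seqEquiv_of_norm_sub_le {ε : ℝ} (hε : 0 ≤ ε) {x y : ℕ → E}
    (h : ∀ (s : Finset ℕ) (a : ℕ → ℝ),
      ‖∑ i ∈ s, a i • y i - ∑ i ∈ s, a i • x i‖ ≤ ε / (1 + ε) * ‖∑ i ∈ s, a i • x i‖) :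
    SeqEquiv (1 + ε) x y := by
  intro s a
  set X := ∑ i ∈ s, a i • x i
  set Y := ∑ i ∈ s, a i • y i
  have hYX := h s a
  have hθ : ε / (1 + ε) ≤ ε := div_le_self hε (by linarith)
  constructor
  · have hX : 1 / (1 + ε) * ‖X‖ = ‖X‖ - ε / (1 + ε) * ‖X‖ := by field_simp; ring
    have := norm_sub_norm_le X Y
    rw [norm_sub_rev] at this
    linarith
  · have := norm_le_norm_add_norm_sub' Y X
    nlinarith [norm_nonneg X]

theorem SeqEquiv.ne_zero {c : ℝ} {x : ℕ → E} {y : ℕ → F} (h : SeqEquiv c x y) (hc : 0 < c)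
    {n : ℕ} (hx : x n ≠ 0) : y n ≠ 0 := by
  intro hy
  have := (h {n} 1).1
  simp only [Finset.sum_singleton, Pi.one_apply, one_smul, hy, norm_zero] at this
  have : 0 < 1 / c * ‖x n‖ := by positivity
  linarith

end Equivalence

namespace RealSchauderBasis

variable {E : Type*} [NormedAddCommGroup E] [NormedSpace ℝ E] (b : RealSchauderBasis E)

def blockProj (p q : ℕ) (v : E) : E :=
  ∑ i ∈ Finset.Ico p q, b.coord i v • b.e i

theorem coord_blockProj (p q : ℕ) (v : E) (j : ℕ) :
    b.coord j (b.blockProj p q v) = if j ∈ Finset.Ico p q then b.coord j v else 0 := by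
  simp [blockProj, map_sum, b.biorth]

theorem isBlockSeq_blockProj {p : ℕ → ℕ} (hp : StrictMono p) (v : ℕ → E)
    (hne : ∀ n, b.blockProj (p n) (p (n + 1)) (v n) ≠ 0) :
    IsBlockSeq b fun n => b.blockProj (p n) (p (n + 1)) (v n) := by
  have hsupp : ∀ n j, b.coord j (b.blockProj (p n) (p (n + 1)) (v n)) ≠ 0 →
      j ∈ Finset.Ico (p n) (p (n + 1)) := fun n j hj => by
    by_contra h
    exact hj (by rw [coord_blockProj, if_neg h])
  refine ⟨hne, fun n => (Finset.finite_toSet _).subset (hsupp n), ?_⟩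
  intro m n hmn i hi j hj
  have hi' := Finset.mem_Ico.mp (hsupp m i hi)
  have hj' := Finset.mem_Ico.mp (hsupp n j hj)
  have := hp.monotone (show m + 1 ≤ n from hmn)
  omega

theorem blockProj_sub_blockProj {p q : ℕ} (hpq : p ≤ q) (v : E) :
    b.blockProj 0 q v - b.blockProj 0 p v = b.blockProj p q v := by
  simp only [blockProj, ← Finset.range_eq_Ico, Finset.sum_Ico_eq_sub _ hpq]

variable {b}

theorem exists_norm_sub_blockProj_lt {x : ℕ → E}
    (hcoord : ∀ i, Tendsto (fun n => b.coord i (x n)) atTop (𝓝 0)) (k₀ p₀ : ℕ) {η : ℝ}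
    (hη : 0 < η) : ∃ k q, k₀ < k ∧ p₀ < q ∧ ‖x k - b.blockProj p₀ q (x k)‖ < η := by
  have hhead : Tendsto (fun n => b.blockProj 0 p₀ (x n)) atTop (𝓝 0) := by
    simpa [blockProj] using tendsto_finsetSum _ fun i _ => (hcoord i).smul_const (b.e i)
  obtain ⟨k, hk₀, hk⟩ := ((eventually_gt_atTop k₀).and
    (hhead.eventually (Metric.ball_mem_nhds 0 (half_pos hη)))).exists
  have htail : Tendsto (fun q => b.blockProj 0 q (x k)) atTop (𝓝 (x k)) := by
    simpa [blockProj, ← Finset.range_eq_Ico] using b.expand (x k)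
  obtain ⟨q, hq₀, hq⟩ := ((eventually_gt_atTop p₀).and
    (htail.eventually (Metric.ball_mem_nhds (x k) (half_pos hη)))).exists
  rw [dist_comm, dist_eq_norm] at hq
  rw [dist_zero_right] at hk
  refine ⟨k, q, hk₀, hq₀, ?_⟩
  calc ‖x k - b.blockProj p₀ q (x k)‖
      = ‖(x k - b.blockProj 0 q (x k)) + b.blockProj 0 p₀ (x k)‖ := by
        rw [← b.blockProj_sub_blockProj hq₀.le, sub_sub_eq_add_sub, add_sub_right_comm]
    _ ≤ ‖x k - b.blockProj 0 q (x k)‖ + ‖b.blockProj 0 p₀ (x k)‖ := norm_add_le _ _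
    _ < η := by linarith

theorem exists_strictMono_norm_sub_blockProj_lt {x : ℕ → E}
    (hcoord : ∀ i, Tendsto (fun n => b.coord i (x n)) atTop (𝓝 0)) {η : ℕ → ℝ}
    (hη : ∀ n, 0 < η n) :
    ∃ k p : ℕ → ℕ, StrictMono k ∧ StrictMono p ∧
      ∀ n, ‖x (k n) - b.blockProj (p n) (p (n + 1)) (x (k n))‖ < η n := by
  choose nextK nextP hnext using fun (st : ℕ × ℕ) (n : ℕ) =>
    exists_norm_sub_blockProj_lt hcoord st.1 st.2 (hη n)
  -- `st n = (k (n - 1), p n)`: the last chosen term and the start of the next block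
  let st : ℕ → ℕ × ℕ := fun n =>
    Nat.rec (0, 0) (fun n s => (nextK s n, nextP s n)) n
  refine ⟨fun n => (st (n + 1)).1, fun n => (st n).2, strictMono_nat_of_lt_succ fun n => ?_,
    strictMono_nat_of_lt_succ fun n => (hnext (st n) n).2.1, fun n => (hnext (st n) n).2.2⟩
  exact (hnext (st (n + 1)) (n + 1)).1

end RealSchauderBasis

theorem block_perturbation_general
    {E : Type*} [NormedAddCommGroup E] [NormedSpace ℝ E]
    (b : RealSchauderBasis E)
    (x : ℕ → E) (hbasic : IsBasicSeq x)
    (hsemi : ∃ m M : ℝ, 0 < m ∧ (∀ n, m ≤ ‖x n‖) ∧ (∀ n, ‖x n‖ ≤ M))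
    (hcoord : ∀ i : ℕ, Filter.Tendsto (fun n => b.coord i (x n)) Filter.atTop (nhds 0))
    (ε : ℝ) (hε : 0 < ε) :
    ∃ (k : ℕ → ℕ) (y : ℕ → E), StrictMono k ∧ IsBlockSeq b y ∧
      SeqEquiv (1 + ε) (x ∘ k) y := by
  obtain ⟨hx0, K, hK1, hK⟩ := hbasic
  obtain ⟨m, -, hm, hmx, -⟩ := hsemi
  set δ := ε / (1 + ε) * m / (2 * K)
  obtain ⟨k, p, hk, hp, hnear⟩ :=
    b.exists_strictMono_norm_sub_blockProj_lt hcoord (η := fun n => δ / 2 / 2 ^ n)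
      fun n => by positivity
  set y := fun n => b.blockProj (p n) (p (n + 1)) (x (k n))
  have hequiv : SeqEquiv (1 + ε) (x ∘ k) y := seqEquiv_of_norm_sub_le hε.le fun s a => by
    calc _ ≤ 2 * K / m * (∑' n : ℕ, δ / 2 / 2 ^ n) * ‖∑ i ∈ s, a i • (x ∘ k) i‖ :=
          (HasBasisConst.comp_strictMono hK hk).norm_sum_smul_sub_le (by linarith) hm
            (fun n => hmx _) (fun n => (hnear n).le) (summable_geometric_two' δ) s a
      _ = _ := by rw [tsum_geometric_two']; simp only [δ]; field_simp
  exact ⟨k, y, hk, b.isBlockSeq_blockProj hp _ fun n => hequiv.ne_zero (by linarith) (hx0 (k n)),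
    hequiv⟩

/-- A seminormalized basic sequence whose basis coordinates tend to zero
has, for every `ε > 0`, a subsequence `(1+ε)`-equivalent to a block sequence. -/
theorem block_perturbation
    {E : Type*} [NormedAddCommGroup E] [NormedSpace ℝ E] [CompleteSpace E]
    (b : RealSchauderBasis E)
    (x : ℕ → E) (hbasic : IsBasicSeq x)
    (hsemi : ∃ m M : ℝ, 0 < m ∧ (∀ n, m ≤ ‖x n‖) ∧ (∀ n, ‖x n‖ ≤ M))
    (hcoord : ∀ i : ℕ, Filter.Tendsto (fun n => b.coord i (x n)) Filter.atTop (nhds 0))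
    (ε : ℝ) (hε : 0 < ε) :
    ∃ (k : ℕ → ℕ) (y : ℕ → E), StrictMono k ∧ IsBlockSeq b y ∧
      SeqEquiv (1 + ε) (x ∘ k) y :=
  block_perturbation_general b x hbasic hsemi hcoord ε hε
end
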